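/- arXiv:2009.01993 — 3 statements merged into one kernel-verified Lean document; each statement's English description precedes it below -/
import Mathlib

section
/- Let 0 < q ≤ 1, let R ≥ 1, let z ∈ ℝ^R have nonnegative entries and let η ∈ ℝ^R have strictly positive entries. Then the ℓ_q quasi-norm of z is bounded by the variational objective: (∑_{r=1}^R z_r^q)^{1/q} ≤ (1/2)·∑_{r=1}^R z_r²/η_r + (1/2)·(∑_{r=1}^R η_r^{q/(2-q)})^{(2-q)/q}. -/
open Finset

/-! Hölder's inequality with the conjugate exponents `2/q` and `2/(2-q)`, applied to
`z^q = (z²/η)^(q/2) · η^(q/2)`, bounds `∑ z^q` by `A^(q/2) B^((2-q)/2)` with `A = ∑ z²/η` and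
`B = ∑ η^(q/(2-q))`. Taking `1/q`-th powers gives `‖z‖_q ≤ √A · √(B^((2-q)/q))`, and AM-GM
finishes. -/

theorem Real.holderConjugate_two_div (q : ℝ) (hq0 : 0 < q) (hq2 : q < 2) :
    (2 / q).HolderConjugate (2 / (2 - q)) := by
  rw [Real.holderConjugate_iff]
  refine ⟨by rw [lt_div_iff₀ hq0]; linarith, ?_⟩
  field_simp [(sub_pos.2 hq2).ne']
  ring

theorem sum_rpow_le_sum_sq_div_rpow_mul_sum_rpow_rpow {ι : Type*} (s : Finset ι) {q : ℝ}
    (hq0 : 0 < q) (hq2 : q < 2) {z η : ι → ℝ} (hz : ∀ i ∈ s, 0 ≤ z i) (hη : ∀ i ∈ s, 0 < η i) :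
    ∑ i ∈ s, z i ^ q ≤
      (∑ i ∈ s, z i ^ 2 / η i) ^ (q / 2) * (∑ i ∈ s, η i ^ (q / (2 - q))) ^ ((2 - q) / 2) := by
  have factor : ∀ i ∈ s, (z i ^ 2 / η i) ^ (q / 2) * η i ^ (q / 2) = z i ^ q := fun i hi => by
    have := hη i hi
    rw [Real.div_rpow (by positivity) this.le, div_mul_cancel₀ _ (by positivity),
      ← Real.rpow_natCast, ← Real.rpow_mul (hz i hi)]
    norm_num
    field_simp
  have first_pow : ∀ i ∈ s, ((z i ^ 2 / η i) ^ (q / 2)) ^ (2 / q) = z i ^ 2 / η i := fun i hi => by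
    have := hη i hi
    rw [← Real.rpow_mul (by positivity), show q / 2 * (2 / q) = 1 by field_simp,
      Real.rpow_one]
  have second_pow : ∀ i ∈ s, (η i ^ (q / 2)) ^ (2 / (2 - q)) = η i ^ (q / (2 - q)) := fun i hi => by
    rw [← Real.rpow_mul (hη i hi).le]
    field_simp
  have holder := Real.inner_le_Lp_mul_Lq_of_nonneg s (Real.holderConjugate_two_div q hq0 hq2)
    (f := fun i => (z i ^ 2 / η i) ^ (q / 2)) (g := fun i => η i ^ (q / 2))
    (fun i hi => by have := hη i hi; positivity) (fun i hi => by have := hη i hi; positivity)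
  rwa [sum_congr rfl factor, sum_congr rfl first_pow, sum_congr rfl second_pow, one_div_div,
    one_div_div] at holder

theorem lq_variational_upper_bound_general
    (q : ℝ) (hq0 : 0 < q) (hq1 : q ≤ 1)
    (R : ℕ)
    (z : Fin R → ℝ) (hz : ∀ r, 0 ≤ z r)
    (η : Fin R → ℝ) (hη : ∀ r, 0 < η r) :
    (∑ r, z r ^ q) ^ (1 / q) ≤
      (1 / 2) * ∑ r, (z r) ^ 2 / η r
        + (1 / 2) * (∑ r, η r ^ (q / (2 - q))) ^ ((2 - q) / q) := by
  set A := ∑ r, z r ^ 2 / η r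
  set B := ∑ r, η r ^ (q / (2 - q))
  have hA : 0 ≤ A := sum_nonneg fun r _ => by have := hη r; positivity
  have hB : 0 ≤ B := sum_nonneg fun r _ => by have := hη r; positivity
  have holder : ∑ r, z r ^ q ≤ A ^ (q / 2) * B ^ ((2 - q) / 2) :=
    sum_rpow_le_sum_sq_div_rpow_mul_sum_rpow_rpow univ hq0 (by linarith)
      (fun r _ => hz r) (fun r _ => hη r)
  have root : (A ^ (q / 2) * B ^ ((2 - q) / 2)) ^ (1 / q) =
      A ^ (1 / 2 : ℝ) * (B ^ ((2 - q) / q)) ^ (1 / 2 : ℝ) := by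
    rw [Real.mul_rpow (by positivity) (by positivity), ← Real.rpow_mul hA, ← Real.rpow_mul hB,
      ← Real.rpow_mul hB]
    congr 2 <;> field_simp
  calc (∑ r, z r ^ q) ^ (1 / q)
      ≤ (A ^ (q / 2) * B ^ ((2 - q) / 2)) ^ (1 / q) :=
        Real.rpow_le_rpow (sum_nonneg fun r _ => Real.rpow_nonneg (hz r) q) holder
          (by positivity)
    _ = A ^ (1 / 2 : ℝ) * (B ^ ((2 - q) / q)) ^ (1 / 2 : ℝ) := root
    _ ≤ 1 / 2 * A + 1 / 2 * B ^ ((2 - q) / q) :=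
        Real.geom_mean_le_arith_mean2_weighted (by norm_num) (by norm_num) hA (by positivity)
          (by norm_num)

/-- Variational upper bound for the ℓ_q quasi-norm: for `0 < q ≤ 1`, nonnegative `z`
and positive `η`,
`(∑ z r ^ q)^(1/q) ≤ (1/2) ∑ z r ^ 2 / η r + (1/2) (∑ η r ^ (q/(2-q)))^((2-q)/q)`. -/
theorem lq_variational_upper_bound
    (q : ℝ) (hq0 : 0 < q) (hq1 : q ≤ 1)
    (R : ℕ) (hR : 1 ≤ R)
    (z : Fin R → ℝ) (hz : ∀ r, 0 ≤ z r)
    (η : Fin R → ℝ) (hη : ∀ r, 0 < η r) :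
    (∑ r, z r ^ q) ^ (1 / q) ≤
      (1 / 2) * ∑ r, (z r) ^ 2 / η r
        + (1 / 2) * (∑ r, η r ^ (q / (2 - q))) ^ ((2 - q) / q) :=
  lq_variational_upper_bound_general q hq0 hq1 R z hz η hη
end

section
/- Let 0 < q ≤ 1, let R ≥ 1, and let z ∈ ℝ^R have strictly positive entries. Define η_r = z_r^{2-q} · (∑_{s=1}^R z_s^q)^{(q-1)/q} for each r. Then each η_r > 0 and the variational objective attains the ℓ_q quasi-norm at this η: (1/2)·∑_{r=1}^R z_r²/η_r + (1/2)·(∑_{r=1}^R η_r^{q/(2-q)})^{(2-q)/q} = (∑_{r=1}^R z_r^q)^{1/q}. -/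
open Finset Real

/-!
With `S = ∑ z_s ^ q`, the weight `η_r = z_r ^ (2 - q) * S ^ ((q - 1) / q)` makes both
`z_r ^ 2 / η_r` and `η_r ^ (q / (2 - q))` equal to `z_r ^ q` times a power of `S`, so each sum is
`S` times a power of `S`, and both halves of the objective collapse to `S ^ (1 / q)`.
-/

lemma self_mul_rpow_eq_rpow {S a b : ℝ} (hS : 0 ≤ S) (hab : 1 + a = b) (hb : b ≠ 0) :
    S * S ^ a = S ^ b := by
  rw [← hab, rpow_add' hS (hab ▸ hb), rpow_one]

section Weight

variable {q x S : ℝ}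

lemma sq_div_weight (hx : 0 < x) (hS : 0 ≤ S) :
    x ^ 2 / (x ^ (2 - q) * S ^ ((q - 1) / q)) = x ^ q * S ^ ((1 - q) / q) := by
  rw [div_mul_eq_div_div, ← rpow_natCast, Nat.cast_ofNat, ← rpow_sub hx, div_eq_mul_inv,
    ← rpow_neg hS]
  ring_nf

lemma weight_rpow (hq0 : q ≠ 0) (hq2 : 2 - q ≠ 0) (hx : 0 ≤ x) (hS : 0 ≤ S) :
    (x ^ (2 - q) * S ^ ((q - 1) / q)) ^ (q / (2 - q)) = x ^ q * S ^ ((q - 1) / (2 - q)) := by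
  rw [mul_rpow (rpow_nonneg hx _) (rpow_nonneg hS _), ← rpow_mul hx, ← rpow_mul hS]
  congr 2 <;> field_simp

end Weight

section Sum

variable {ι : Type*} [Fintype ι] {q : ℝ} {z : ι → ℝ}

lemma sum_sq_div_weight (hq0 : q ≠ 0) (hz : ∀ r, 0 < z r) :
    ∑ r, z r ^ 2 / (z r ^ (2 - q) * (∑ s, z s ^ q) ^ ((q - 1) / q))
      = (∑ s, z s ^ q) ^ (1 / q) := by
  have hS : 0 ≤ ∑ s, z s ^ q := sum_nonneg fun s _ => rpow_nonneg (hz s).le q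
  simp_rw [sq_div_weight (hz _) hS]
  rw [← sum_mul]
  exact self_mul_rpow_eq_rpow hS (by field_simp; ring) (one_div_ne_zero hq0)

lemma sum_weight_rpow_rpow (hq0 : q ≠ 0) (hq2 : 2 - q ≠ 0) (hz : ∀ r, 0 ≤ z r) :
    (∑ r, (z r ^ (2 - q) * (∑ s, z s ^ q) ^ ((q - 1) / q)) ^ (q / (2 - q))) ^ ((2 - q) / q)
      = (∑ s, z s ^ q) ^ (1 / q) := by
  have hS : 0 ≤ ∑ s, z s ^ q := sum_nonneg fun s _ => rpow_nonneg (hz s) q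
  simp_rw [weight_rpow hq0 hq2 (hz _) hS]
  rw [← sum_mul, self_mul_rpow_eq_rpow hS (by field_simp; ring) (one_div_ne_zero hq2),
    ← rpow_mul hS]
  field_simp

end Sum

theorem lq_variational_attained_general
    (q : ℝ) (hq0 : 0 < q) (hq1 : q ≤ 1)
    (R : ℕ)
    (z : Fin R → ℝ) (hz : ∀ r, 0 < z r)
    (η : Fin R → ℝ)
    (hη : ∀ r, η r = z r ^ (2 - q) * (∑ s, z s ^ q) ^ ((q - 1) / q)) :
    (∀ r, 0 < η r) ∧
      (1 / 2) * (∑ r, (z r) ^ 2 / η r)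
        + (1 / 2) * (∑ r, η r ^ (q / (2 - q))) ^ ((2 - q) / q)
      = (∑ r, z r ^ q) ^ (1 / q) := by
  obtain rfl : η = fun r => z r ^ (2 - q) * (∑ s, z s ^ q) ^ ((q - 1) / q) := funext hη
  have hq2 : 2 - q ≠ 0 := by linarith
  refine ⟨fun r => ?_, ?_⟩
  · have hS : 0 < ∑ s, z s ^ q := (rpow_pos_of_pos (hz r) q).trans_le
      (single_le_sum (fun s _ => rpow_nonneg (hz s).le q) (mem_univ r))
    exact mul_pos (rpow_pos_of_pos (hz r) _) (rpow_pos_of_pos hS _)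
  · rw [sum_sq_div_weight hq0.ne' hz, sum_weight_rpow_rpow hq0.ne' hq2 fun r => (hz r).le]
    ring

/-- The variational objective attains the ℓ_q quasi-norm at
`η r = z r ^ (2 - q) * (∑ s, z s ^ q) ^ ((q - 1)/q)`. -/
theorem lq_variational_attained
    (q : ℝ) (hq0 : 0 < q) (hq1 : q ≤ 1)
    (R : ℕ) (hR : 1 ≤ R)
    (z : Fin R → ℝ) (hz : ∀ r, 0 < z r)
    (η : Fin R → ℝ)
    (hη : ∀ r, η r = z r ^ (2 - q) * (∑ s, z s ^ q) ^ ((q - 1) / q)) :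
    (∀ r, 0 < η r) ∧
      (1 / 2) * (∑ r, (z r) ^ 2 / η r)
        + (1 / 2) * (∑ r, η r ^ (q / (2 - q))) ^ ((2 - q) / q)
      = (∑ r, z r ^ q) ^ (1 / q) :=
  lq_variational_attained_general q hq0 hq1 R z hz η hη
end

section
/- Let 0 < q ≤ 1, let R ≥ 1, and let z ∈ ℝ^R have strictly positive entries. Then the ℓ_q quasi-norm (∑_{r=1}^R z_r^q)^{1/q} is the least element of the set of values { (1/2)·∑_{r=1}^R z_r²/η_r + (1/2)·(∑_{r=1}^R η_r^{q/(2-q)})^{(2-q)/q} : η ∈ ℝ^R, η_r > 0 for all r }; that is, it is a lower bound of this set and is attained by some positive η. -/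
/-!
Writing `z_r^q = (z_r^2/η_r · η_r)^{q/2}`, Hölder's inequality for the exponent triple
`1⁻¹ + ((2-q)/q) = (q/2)⁻¹` gives `‖z‖_q ≤ (∑ z_r^2/η_r)^{1/2} ‖η‖_{q/(2-q)}^{1/2}`, and the
arithmetic–geometric mean inequality bounds the right-hand side by the objective. Equality holds
throughout exactly when `η_r` is proportional to `z_r^{2-q}` and the two halves of the objective
agree, which pins down the minimiser `η_r = z_r^{2-q} ‖z‖_q^{q-1}`.
-/

open Finset Real

section
variable {ι : Type*} [Fintype ι] {q : ℝ} {z η : ι → ℝ}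

noncomputable def lqNorm (q : ℝ) (z : ι → ℝ) : ℝ :=
  (∑ r, z r ^ q) ^ (1 / q)

noncomputable def lqVariationalObjective (q : ℝ) (z η : ι → ℝ) : ℝ :=
  (1 / 2) * (∑ r, z r ^ 2 / η r) + (1 / 2) * (∑ r, η r ^ (q / (2 - q))) ^ ((2 - q) / q)

noncomputable def lqOptimalWeight (q : ℝ) (z : ι → ℝ) (r : ι) : ℝ :=
  z r ^ (2 - q) * lqNorm q z ^ (q - 1)

theorem lqNorm_pos [Nonempty ι] (hz : ∀ r, 0 < z r) : 0 < lqNorm q z :=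
  rpow_pos_of_pos (sum_pos (fun r _ => rpow_pos_of_pos (hz r) q) univ_nonempty) _

theorem lqNorm_rpow (hq : q ≠ 0) (hz : ∀ r, 0 ≤ z r) : lqNorm q z ^ q = ∑ r, z r ^ q := by
  rw [lqNorm, one_div, rpow_inv_rpow (sum_nonneg fun r _ => rpow_nonneg (hz r) q) hq]

theorem sum_rpow_le_sum_sq_div_mul (hq0 : 0 < q) (hq2 : q < 2) (hz : ∀ r, 0 ≤ z r)
    (hη : ∀ r, 0 < η r) :
    ∑ r, z r ^ q ≤
      (∑ r, z r ^ 2 / η r) ^ (q / 2) * (∑ r, η r ^ (q / (2 - q))) ^ ((2 - q) / 2) := by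
  have hq2' : 0 < 2 - q := by linarith
  have htriple : HolderTriple 1 (q / (2 - q)) (q / 2) :=
    ⟨by field_simp; ring, one_pos, by positivity⟩
  have h := Lr_rpow_le_Lp_mul_Lq_of_nonneg univ htriple
    (fun r _ => div_nonneg (sq_nonneg (z r)) (hη r).le) (fun r _ => (hη r).le)
  have hterm : ∀ r, (z r ^ 2 / η r * η r) ^ (q / 2) = z r ^ q := fun r => by
    rw [div_mul_cancel₀ _ (hη r).ne', ← rpow_natCast, ← rpow_mul (hz r)]
    congr 1
    push_cast
    field_simp
  simp only [hterm, rpow_one] at h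
  convert h using 3 <;> field_simp

theorem lqNorm_le_lqVariationalObjective (hq0 : 0 < q) (hq2 : q < 2) (hz : ∀ r, 0 ≤ z r)
    (hη : ∀ r, 0 < η r) : lqNorm q z ≤ lqVariationalObjective q z η := by
  set X := ∑ r, z r ^ 2 / η r
  set S := ∑ r, η r ^ (q / (2 - q))
  have hX : 0 ≤ X := sum_nonneg fun r _ => div_nonneg (sq_nonneg (z r)) (hη r).le
  have hS : 0 ≤ S := sum_nonneg fun r _ => rpow_nonneg (hη r).le _
  calc lqNorm q z ≤ (X ^ (q / 2) * S ^ ((2 - q) / 2)) ^ (1 / q) :=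
        rpow_le_rpow (sum_nonneg fun r _ => rpow_nonneg (hz r) q)
          (sum_rpow_le_sum_sq_div_mul hq0 hq2 hz hη) (by positivity)
    _ = X ^ (1 / 2 : ℝ) * (S ^ ((2 - q) / q)) ^ (1 / 2 : ℝ) := by
        rw [mul_rpow (by positivity) (by positivity), ← rpow_mul hX, ← rpow_mul hS,
          ← rpow_mul hS]
        congr 2 <;> field_simp
    _ ≤ 1 / 2 * X + 1 / 2 * S ^ ((2 - q) / q) :=
        geom_mean_le_arith_mean2_weighted (by norm_num) (by norm_num) hX (by positivity)
          (by norm_num)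

theorem lqOptimalWeight_pos (hz : ∀ r, 0 < z r) (r : ι) : 0 < lqOptimalWeight q z r :=
  have : Nonempty ι := ⟨r⟩
  mul_pos (rpow_pos_of_pos (hz r) _) (rpow_pos_of_pos (lqNorm_pos hz) _)

theorem sum_sq_div_lqOptimalWeight [Nonempty ι] (hq0 : 0 < q) (hz : ∀ r, 0 < z r) :
    ∑ r, z r ^ 2 / lqOptimalWeight q z r = lqNorm q z := by
  have hN := lqNorm_pos (q := q) hz
  have hterm : ∀ r, z r ^ 2 / lqOptimalWeight q z r = z r ^ q / lqNorm q z ^ (q - 1) :=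
    fun r => by
      rw [lqOptimalWeight, ← div_div, ← rpow_natCast, ← rpow_sub (hz r)]
      norm_num
  rw [sum_congr rfl fun r _ => hterm r, ← sum_div, ← lqNorm_rpow hq0.ne' fun r => (hz r).le,
    ← rpow_sub hN]
  norm_num

theorem sum_lqOptimalWeight_rpow [Nonempty ι] (hq0 : 0 < q) (hq2 : q < 2)
    (hz : ∀ r, 0 < z r) :
    ∑ r, lqOptimalWeight q z r ^ (q / (2 - q)) = lqNorm q z ^ (q / (2 - q)) := by
  have hN := lqNorm_pos (q := q) hz
  have hq2' : 2 - q ≠ 0 := by linarith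
  have hterm : ∀ r, lqOptimalWeight q z r ^ (q / (2 - q)) =
      z r ^ q * lqNorm q z ^ ((q - 1) * (q / (2 - q))) := fun r => by
    rw [lqOptimalWeight, mul_rpow (rpow_nonneg (hz r).le _) (rpow_nonneg hN.le _),
      ← rpow_mul (hz r).le, ← rpow_mul hN.le]
    congr 2
    field_simp
  rw [sum_congr rfl fun r _ => hterm r, ← sum_mul, ← lqNorm_rpow hq0.ne' fun r => (hz r).le,
    ← rpow_add hN]
  congr 1
  field_simp
  ring

theorem lqVariationalObjective_lqOptimalWeight (hq0 : 0 < q) (hq2 : q < 2)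
    (hz : ∀ r, 0 < z r) : lqVariationalObjective q z (lqOptimalWeight q z) = lqNorm q z := by
  rcases isEmpty_or_nonempty ι with hι | hι
  · simp [lqVariationalObjective, lqNorm, zero_rpow, hq0.ne', (by linarith : 2 - q ≠ 0)]
  rw [lqVariationalObjective, sum_sq_div_lqOptimalWeight hq0 hz,
    sum_lqOptimalWeight_rpow hq0 hq2 hz, ← rpow_mul (lqNorm_pos hz).le,
    div_mul_div_cancel₀ (by linarith : 2 - q ≠ 0), div_self hq0.ne', rpow_one]
  ring

end

theorem lq_variational_isLeast_general
    (q : ℝ) (hq0 : 0 < q) (hq1 : q ≤ 1)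
    (R : ℕ)
    (z : Fin R → ℝ) (hz : ∀ r, 0 < z r) :
    IsLeast
      { v : ℝ | ∃ η : Fin R → ℝ, (∀ r, 0 < η r) ∧
          v = (1 / 2) * (∑ r, (z r) ^ 2 / η r)
              + (1 / 2) * (∑ r, η r ^ (q / (2 - q))) ^ ((2 - q) / q) }
      ((∑ r, z r ^ q) ^ (1 / q)) := by
  have hq2 : q < 2 := by linarith
  refine ⟨⟨lqOptimalWeight q z, lqOptimalWeight_pos hz,
    (lqVariationalObjective_lqOptimalWeight hq0 hq2 hz).symm⟩, ?_⟩
  rintro v ⟨η, hη, rfl⟩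
  exact lqNorm_le_lqVariationalObjective hq0 hq2 (fun r => (hz r).le) hη

/-- The ℓ_q quasi-norm is the least value of the variational objective over
positive vectors `η`. -/
theorem lq_variational_isLeast
    (q : ℝ) (hq0 : 0 < q) (hq1 : q ≤ 1)
    (R : ℕ) (hR : 1 ≤ R)
    (z : Fin R → ℝ) (hz : ∀ r, 0 < z r) :
    IsLeast
      { v : ℝ | ∃ η : Fin R → ℝ, (∀ r, 0 < η r) ∧
          v = (1 / 2) * (∑ r, (z r) ^ 2 / η r)
              + (1 / 2) * (∑ r, η r ^ (q / (2 - q))) ^ ((2 - q) / q) }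
      ((∑ r, z r ^ q) ^ (1 / q)) :=
  lq_variational_isLeast_general q hq0 hq1 R z hz
end
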